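/- Lemma (gsd step, case d = 0): if x ∈ [-1,1], |x| ≤ 1/2, and (a :: b :: tq) is a Gray code of x, then (a :: nh(tq)) is a Gray code of 2x, where nh negates the head digit of a stream. -/

import Mathlib

/-- Gray-code digits: `none` is ⊥, `some false` is L, `some true` is R. -/
abbrev GDigit := Option Bool

def RD (a : GDigit) (x : ℝ) : Prop :=
  (x < 0 ∧ a = some false) ∨ (x > 0 ∧ a = some true) ∨ x = 0

/-- `GrayRel q x`: `x` has infinite Gray code `q`, defined as the greatest
relation satisfying the unfolding
`R(a::q, x) ↔ -1 ≤ x ≤ 1 ∧ R_D(a,x) ∧ R(q, 1 - 2|x|)`. -/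
def GrayRel (q : ℕ → GDigit) (x : ℝ) : Prop :=
  ∃ R : (ℕ → GDigit) → ℝ → Prop,
    (∀ q x, R q x →
      -1 ≤ x ∧ x ≤ 1 ∧ RD (q 0) x ∧ R (fun i => q (i + 1)) (1 - 2 * |x|)) ∧
    R q x

def consD (a : GDigit) (s : ℕ → GDigit) : ℕ → GDigit :=
  fun n => match n with | 0 => a | n + 1 => s n

def notD : GDigit → GDigit
  | none => none
  | some b => some (!b)


/-!
For `|x| ≤ 1/2` the tent map `t ↦ 1 - 2|t|` satisfies `t(t(x)) = 4|x| - 1 = -t(2x)`. So after two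
unfoldings of a code of `x` we hold a code of `-t(2x)`; negating its head digit turns it into a code
of `t(2x)`, and the first digit of `x` is valid for `2x` since both have the same sign.
-/

lemma GrayRel.destruct {q : ℕ → GDigit} {x : ℝ} (h : GrayRel q x) :
    -1 ≤ x ∧ x ≤ 1 ∧ RD (q 0) x ∧ GrayRel (fun i => q (i + 1)) (1 - 2 * |x|) := by
  obtain ⟨R, hR, hqx⟩ := h
  obtain ⟨hlo, hhi, hd, hs⟩ := hR q x hqx
  exact ⟨hlo, hhi, hd, R, hR, hs⟩

lemma GrayRel.cons {a : GDigit} {s : ℕ → GDigit} {x : ℝ}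
    (hlo : -1 ≤ x) (hhi : x ≤ 1) (hd : RD a x) (hs : GrayRel s (1 - 2 * |x|)) :
    GrayRel (consD a s) x := by
  refine ⟨fun t z => GrayRel t z ∨ (t = consD a s ∧ z = x), ?_, Or.inr ⟨rfl, rfl⟩⟩
  rintro t z (hg | ⟨rfl, rfl⟩)
  · obtain ⟨hlo', hhi', hd', hs'⟩ := hg.destruct
    exact ⟨hlo', hhi', hd', Or.inl hs'⟩
  · exact ⟨hlo, hhi, hd, Or.inl hs⟩

lemma RD.neg {a : GDigit} {x : ℝ} (h : RD a x) : RD (notD a) (-x) := by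
  rcases h with ⟨hx, rfl⟩ | ⟨hx, rfl⟩ | rfl
  · exact Or.inr (Or.inl ⟨neg_pos.mpr hx, rfl⟩)
  · exact Or.inl ⟨neg_neg_iff_pos.mpr hx, rfl⟩
  · exact Or.inr (Or.inr neg_zero)

lemma RD.mul_pos {a : GDigit} {x c : ℝ} (h : RD a x) (hc : 0 < c) : RD a (c * x) := by
  rcases h with ⟨hx, rfl⟩ | ⟨hx, rfl⟩ | rfl
  · exact Or.inl ⟨mul_neg_of_pos_of_neg hc hx, rfl⟩
  · exact Or.inr (Or.inl ⟨_root_.mul_pos hc hx, rfl⟩)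
  · exact Or.inr (Or.inr (mul_zero c))

lemma GrayRel.neg {q : ℕ → GDigit} {x : ℝ} (h : GrayRel q x) :
    GrayRel (consD (notD (q 0)) (fun i => q (i + 1))) (-x) := by
  obtain ⟨hlo, hhi, hd, hs⟩ := h.destruct
  refine GrayRel.cons (by linarith) (by linarith) hd.neg ?_
  rwa [abs_neg]

theorem gsd_step_zero_general (x : ℝ) (q : ℕ → GDigit)
    (hx : |x| ≤ 1 / 2)
    (hg : GrayRel q x) :
    GrayRel (consD (q 0) (consD (notD (q 2)) (fun i => q (i + 3)))) (2 * x) := by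
  obtain ⟨-, -, hd, hg1⟩ := hg.destruct
  obtain ⟨-, -, -, hg2⟩ := hg1.destruct
  have htent : 1 - 2 * abs (1 - 2 * |x|) = -(1 - 2 * |2 * x|) := by
    rw [abs_of_nonneg (by linarith : (0 : ℝ) ≤ 1 - 2 * |x|), abs_mul, abs_two]
    ring
  rw [htent] at hg2
  obtain ⟨hlo, hhi⟩ := abs_le.mp hx
  refine GrayRel.cons (by linarith) (by linarith) (hd.mul_pos two_pos) ?_
  simpa only [neg_neg] using hg2.neg

theorem gsd_step_zero (x : ℝ) (q : ℕ → GDigit)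
    (h1 : -1 ≤ x) (h2 : x ≤ 1) (hx : |x| ≤ 1 / 2)
    (hg : GrayRel q x) :
    GrayRel (consD (q 0) (consD (notD (q 2)) (fun i => q (i + 3)))) (2 * x) :=
  gsd_step_zero_general x q hx hg
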